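/- arXiv:2603.14370 — 5 statements merged into one kernel-verified Lean document; each statement's English description precedes it below -/
import Mathlib

section
/- Let λ be a partition of n, c a removable corner, and a₁, a₂ two distinct addable corners such that both transfers μ₁ = λ(c→a₁) and μ₂ = λ(c→a₂) are admissible. Then μ₁ and μ₂ are adjacent in the partition graph G_n; consequently λ, μ₁, μ₂ span a triangle in G_n. -/
open Finset

/-- A partition of `n`: a finitely supported weakly decreasing sequence of
row lengths (rows indexed from `0`) summing to `n`. -/
structure NPartition (n : ℕ) where
  parts : ℕ →₀ ℕ
  antitone : ∀ ⦃i j : ℕ⦄, i ≤ j → parts j ≤ parts i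
  total : parts.sum (fun _ m => m) = n

namespace NPartition

variable {n : ℕ}

/-- The multiset of (positive) row lengths of a partition. -/
def rows (f : NPartition n) : Multiset ℕ := f.parts.support.val.map f.parts

/-- `conj f j` is the number of rows of length at least `j + 1`; i.e. the length of
the `(j+1)`-st column (columns indexed from `0`), the conjugate partition `λ'`. -/
def conj (f : NPartition n) (j : ℕ) : ℕ :=
  (f.rows.filter (fun m => j + 1 ≤ m)).card

/-- The height `h(λ) = ∑ i · λ_i`, rows indexed from `1`. -/
def height (f : NPartition n) : ℕ :=
  ∑ i ∈ f.parts.support, (i + 1) * f.parts i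

/-- Row `r` (0-indexed) of `f` carries a removable corner: removing its last cell
again yields a partition. -/
def IsRemovableRow (f : NPartition n) (r : ℕ) : Prop :=
  f.parts (r + 1) < f.parts r

/-- Row `r` (0-indexed) of `f` carries an addable corner: adding a cell at the end
of this row again yields a partition. -/
def IsAddableRow (f : NPartition n) (r : ℕ) : Prop :=
  r = 0 ∨ f.parts r < f.parts (r - 1)

/-- The multiset of rows obtained from `f` by removing one cell from the corner in
row `rc` and adding one cell at the corner in row `ra` (zero rows discarded);
reordering is built in since this is a multiset. -/
def transferRows (f : NPartition n) (rc ra : ℕ) : Multiset ℕ :=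
  ((f.rows.erase (f.parts rc)).erase (f.parts ra))
    + Multiset.filter (fun m => 0 < m) {f.parts rc - 1, f.parts ra + 1}

/-- `IsTransfer f g rc ra` : `g = λ(c → a)` is obtained from `f = λ` by the admissible
transfer of one cell from the removable corner `c` in row `rc` to the addable corner
`a` in row `ra ≠ rc`, followed by reordering, and `g ≠ f`. -/
def IsTransfer (f g : NPartition n) (rc ra : ℕ) : Prop :=
  f.IsRemovableRow rc ∧ f.IsAddableRow ra ∧ rc ≠ ra ∧ g ≠ f ∧
    g.rows = f.transferRows rc ra

/-- Adjacency in the partition graph `G_n`. -/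
def Adj (f g : NPartition n) : Prop :=
  (∃ rc ra, IsTransfer f g rc ra) ∨ (∃ rc ra, IsTransfer g f rc ra)

/-- The one-row partition `(n)`. -/
noncomputable def onerow (n : ℕ) : NPartition n where
  parts := Finsupp.single 0 n
  antitone := by
    intro i j hij
    by_cases hi : i = 0
    · subst hi
      by_cases hj : j = 0 <;> simp [Finsupp.single_apply, eq_comm, hj]
    · have hj : j ≠ 0 := by omega
      simp [Finsupp.single_apply, eq_comm, hi, hj]
  total := Finsupp.sum_single_index rfl

end NPartition

/-! In conjugate coordinates the transfer `λ(c → a)` is `λ' - e u + e v`, where `u + 1` is the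
length of the row of `c` and `v` the length of the row of `a`. Hence
`μ₁' = λ' - e u + e v₁` and `μ₂' = λ' - e u + e v₂`, so `μ₂' = μ₁' - e v₁ + e v₂`, and `v₁ ≠ v₂`
because distinct addable corners lie in distinct columns. Conversely, whenever
`μ' = ν' - e u + e v` with `u ≠ v`, the inequalities `μ'(u + 1) ≤ μ' u` and `μ' v ≤ μ'(v - 1)`
force a removable corner of `ν` at the foot of column `u` and an addable corner of `ν` at the foot
of column `v`, so `μ` is an admissible transfer of `ν`. -/

theorem Finset.lt_card_iff_mem_of_isLowerSet {S : Finset ℕ} (hS : IsLowerSet (S : Set ℕ))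
    (i : ℕ) : i < S.card ↔ i ∈ S := by
  constructor
  · intro hi
    by_contra hiS
    have hsub : S ⊆ Finset.range i := fun j hj =>
      Finset.mem_range.mpr (lt_of_not_ge fun hij => hiS (hS hij hj))
    simpa using (Finset.card_le_card hsub).trans_lt' hi
  · intro hiS
    have hsub : Finset.range (i + 1) ⊆ S := fun j hj =>
      hS (Nat.le_of_lt_succ (Finset.mem_range.mp hj)) hiS
    simpa using Finset.card_le_card hsub

theorem Multiset.countP_succ_le_eq_add_count (s : Multiset ℕ) (v : ℕ) :
    s.countP (v + 1 ≤ ·) = s.countP (v + 1 + 1 ≤ ·) + s.count (v + 1) := by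
  induction s using Multiset.induction_on with
  | empty => simp
  | cons a s ih =>
    simp only [Multiset.countP_cons, Multiset.count_cons]
    split_ifs <;> omega

theorem Multiset.eq_of_forall_countP_succ_le_eq {s t : Multiset ℕ} (hs : 0 ∉ s) (ht : 0 ∉ t)
    (h : ∀ j, s.countP (j + 1 ≤ ·) = t.countP (j + 1 ≤ ·)) : s = t := by
  ext v
  cases v with
  | zero => rw [Multiset.count_eq_zero_of_notMem hs, Multiset.count_eq_zero_of_notMem ht]
  | succ v =>
    have hs' := s.countP_succ_le_eq_add_count v
    have ht' := t.countP_succ_le_eq_add_count v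
    have := h v; have := h (v + 1)
    omega

namespace NPartition

variable {n : ℕ}

theorem zero_notMem_rows (f : NPartition n) : 0 ∉ f.rows := by
  simp [rows]

theorem conj_eq_countP (f : NPartition n) (j : ℕ) : f.conj j = f.rows.countP (j + 1 ≤ ·) :=
  (Multiset.countP_eq_card_filter _ _).symm

theorem lt_conj_iff (f : NPartition n) (i v : ℕ) : i < f.conj v ↔ v < f.parts i := by
  classical
  set S := f.parts.support.filter (fun i => v + 1 ≤ f.parts i)
  have hmem : ∀ i, i ∈ S ↔ v + 1 ≤ f.parts i := fun i => by
    simp only [S, Finset.mem_filter, Finsupp.mem_support_iff]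
    omega
  have hconj : f.conj v = S.card := by
    simp only [conj, rows, Multiset.filter_map, Multiset.card_map]
    rfl
  have hlower : IsLowerSet (S : Set ℕ) := fun j i hij hj => by
    simp only [Finset.mem_coe, hmem] at hj ⊢
    exact hj.trans (f.antitone hij)
  rw [hconj, Finset.lt_card_iff_mem_of_isLowerSet hlower]
  exact hmem i

theorem conj_injective : Function.Injective (conj : NPartition n → ℕ → ℕ) := by
  intro f g h
  have hparts : f.parts = g.parts := by
    ext i
    exact eq_of_forall_lt_iff fun v => by rw [← lt_conj_iff, ← lt_conj_iff, h]
  cases f; cases g; cases hparts; rfl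

theorem conj_succ_le (f : NPartition n) (v : ℕ) : f.conj (v + 1) ≤ f.conj v := by
  by_contra! h
  have := (f.lt_conj_iff (f.conj v) (v + 1)).mp h
  exact lt_irrefl _ ((f.lt_conj_iff (f.conj v) v).mpr (by omega))

theorem isAddableRow_conj (f : NPartition n) (v : ℕ) : f.IsAddableRow (f.conj v) := by
  rcases Nat.eq_zero_or_pos (f.conj v) with h | h
  · exact Or.inl h
  · have hprev := (f.lt_conj_iff (f.conj v - 1) v).mp (by omega)
    have hcur := (f.lt_conj_iff (f.conj v) v).not.mp (lt_irrefl _)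
    exact Or.inr (by omega)

theorem isRemovableRow_conj_sub_one (f : NPartition n) {v : ℕ} (h : 0 < f.conj v) :
    f.IsRemovableRow (f.conj v - 1) := by
  have hprev := (f.lt_conj_iff (f.conj v - 1) v).mp (by omega)
  have hcur := (f.lt_conj_iff (f.conj v) v).not.mp (lt_irrefl _)
  unfold IsRemovableRow
  rw [Nat.sub_add_cancel h]
  omega

theorem parts_eq_of_conj_le_of_lt (f : NPartition n) {i v : ℕ} (h₁ : f.conj (v + 1) ≤ i)
    (h₂ : i < f.conj v) : f.parts i = v + 1 := by
  have := (f.lt_conj_iff i v).mp h₂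
  have := (f.lt_conj_iff i (v + 1)).not.mp (by omega)
  omega

theorem parts_conj_zero (f : NPartition n) : f.parts (f.conj 0) = 0 := by
  have := (f.lt_conj_iff (f.conj 0) 0).not.mp (lt_irrefl _)
  omega

theorem parts_injOn_isAddableRow (f : NPartition n) : Set.InjOn f.parts {r | f.IsAddableRow r} := by
  have hlt : ∀ ⦃a b⦄, f.IsAddableRow b → a < b → f.parts b < f.parts a := by
    rintro a b (rfl | hb) hab
    · omega
    · exact hb.trans_le (f.antitone (by omega))
  intro a ha b hb hab
  by_contra hne
  rcases Nat.lt_or_gt_of_ne hne with h | h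
  · exact (hlt hb h).ne' hab
  · exact (hlt ha h).ne hab

theorem zero_notMem_transferRows (f : NPartition n) (rc ra : ℕ) : 0 ∉ f.transferRows rc ra := by
  simp only [transferRows, Multiset.mem_add, Multiset.mem_filter, lt_irrefl, and_false, or_false]
  exact fun h => f.zero_notMem_rows (Multiset.mem_of_mem_erase (Multiset.mem_of_mem_erase h))

theorem parts_mem_rows_erase (f : NPartition n) {rc ra : ℕ} (hne : rc ≠ ra)
    (hc : 0 < f.parts rc) (ha : 0 < f.parts ra) : f.parts ra ∈ f.rows.erase (f.parts rc) := by
  classical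
  have hsupp : ({rc, ra} : Finset ℕ) ⊆ f.parts.support := by
    intro i hi
    rcases Finset.mem_insert.mp hi with rfl | hi
    · exact Finsupp.mem_support_iff.mpr hc.ne'
    · exact Finset.mem_singleton.mp hi ▸ Finsupp.mem_support_iff.mpr ha.ne'
  have hle : f.parts rc ::ₘ {f.parts ra} ≤ f.rows := by
    simpa [rows, Finset.insert_val_of_notMem, hne] using
      Multiset.map_le_map (f := f.parts) (Finset.val_le_iff.mpr hsupp)
  have hmem : f.parts rc ∈ f.rows := Multiset.mem_of_le hle (Multiset.mem_cons_self _ _)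
  rw [← Multiset.cons_erase hmem, Multiset.cons_le_cons_iff, Multiset.singleton_le] at hle
  exact hle

theorem countP_transferRows (f : NPartition n) {rc ra : ℕ} (hc : 0 < f.parts rc) (hne : rc ≠ ra)
    (j : ℕ) :
    (f.transferRows rc ra).countP (j + 1 ≤ ·) + (if j = f.parts rc - 1 then 1 else 0)
      = f.conj j + (if j = f.parts ra then 1 else 0) := by
  classical
  have herase : ∀ {s : Multiset ℕ} {a : ℕ}, a ∈ s →
      (s.erase a).countP (j + 1 ≤ ·) + (if j + 1 ≤ a then 1 else 0) = s.countP (j + 1 ≤ ·) :=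
    fun ha => by rw [← Multiset.countP_cons, Multiset.cons_erase ha]
  have herase_c : (f.rows.erase (f.parts rc)).countP (j + 1 ≤ ·)
      + (if j + 1 ≤ f.parts rc then 1 else 0) = f.conj j := by
    rw [conj_eq_countP]
    exact herase (Multiset.mem_map_of_mem _ (Finsupp.mem_support_iff.mpr hc.ne'))
  have herase_a : ((f.rows.erase (f.parts rc)).erase (f.parts ra)).countP (j + 1 ≤ ·)
      + (if j + 1 ≤ f.parts ra then 1 else 0) = (f.rows.erase (f.parts rc)).countP (j + 1 ≤ ·) := by
    rcases Nat.eq_zero_or_pos (f.parts ra) with h0 | h0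
    · rw [h0, Multiset.erase_of_notMem fun h => f.zero_notMem_rows (Multiset.mem_of_mem_erase h)]
      simp
    · exact herase (f.parts_mem_rows_erase hne hc h0)
  have hadded :
      (Multiset.filter (fun m => 0 < m) {f.parts rc - 1, f.parts ra + 1}).countP (j + 1 ≤ ·)
      = (if j + 1 ≤ f.parts rc - 1 then 1 else 0) + (if j + 1 ≤ f.parts ra + 1 then 1 else 0) := by
    simp only [Multiset.countP_filter, Multiset.insert_eq_cons, ← Multiset.cons_zero,
      Multiset.countP_cons, Multiset.countP_zero]
    split_ifs <;> omega
  rw [transferRows, Multiset.countP_add, hadded]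
  split_ifs at herase_c herase_a ⊢ <;> omega

/-- In conjugate coordinates, `g' = f' - e u + e v`: one cell moves from column `u` to
column `v`. -/
def ConjShift (f g : NPartition n) (u v : ℕ) : Prop :=
  ∀ j, g.conj j + (if j = u then 1 else 0) = f.conj j + (if j = v then 1 else 0)

theorem IsTransfer.conjShift {f g : NPartition n} {rc ra : ℕ} (h : IsTransfer f g rc ra) :
    ConjShift f g (f.parts rc - 1) (f.parts ra) := fun j => by
  obtain ⟨hrc, -, hne, -, hrows⟩ := h
  rw [conj_eq_countP, hrows]
  exact f.countP_transferRows (Nat.zero_lt_of_lt hrc) hne j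

namespace ConjShift

variable {f g k : NPartition n} {u v w : ℕ}

theorem symm (h : ConjShift f g u v) : ConjShift g f v u := fun j => (h j).symm

theorem trans (h₁ : ConjShift f g u v) (h₂ : ConjShift g k v w) : ConjShift f k u w := fun j => by
  have := h₁ j
  have := h₂ j
  split_ifs at * <;> omega

theorem ne (h : ConjShift f g u v) (huv : u ≠ v) : g ≠ f := by
  rintro rfl
  simpa [huv] using h u

theorem conj_succ_lt_left (h : ConjShift f g u v) (huv : u ≠ v) : f.conj (u + 1) < f.conj u := by
  have := h u
  have := h (u + 1)
  have := g.conj_succ_le u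
  split_ifs at * <;> omega

theorem conj_succ_lt_right (h : ConjShift f g u (w + 1)) (huv : u ≠ w + 1) :
    f.conj (w + 1) < f.conj w := by
  have := h w
  have := h (w + 1)
  have := g.conj_succ_le w
  split_ifs at * <;> omega

theorem exists_isTransfer (h : ConjShift f g u v) (huv : u ≠ v) :
    ∃ rc ra, IsTransfer f g rc ra := by
  have hu := h.conj_succ_lt_left huv
  have hc : f.parts (f.conj u - 1) = u + 1 := f.parts_eq_of_conj_le_of_lt (by omega) (by omega)
  have ha : f.parts (f.conj v) = v := by
    cases v with
    | zero => exact f.parts_conj_zero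
    | succ w => exact f.parts_eq_of_conj_le_of_lt le_rfl (h.conj_succ_lt_right huv)
  have hne : f.conj u - 1 ≠ f.conj v := by
    -- a shared row would make `g'` increase from column `u` to column `u + 1`
    intro heq
    obtain rfl : v = u + 1 := by rw [← ha, ← heq, hc]
    have := h u
    have := h (u + 1)
    have := g.conj_succ_le u
    split_ifs at * <;> omega
  refine ⟨f.conj u - 1, f.conj v, f.isRemovableRow_conj_sub_one (by omega), f.isAddableRow_conj v,
    hne, h.ne huv, Multiset.eq_of_forall_countP_succ_le_eq g.zero_notMem_rows
      (f.zero_notMem_transferRows _ _) fun j => ?_⟩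
  have htransfer := f.countP_transferRows (by omega) hne j
  rw [hc, ha, Nat.add_sub_cancel] at htransfer
  have := h j
  rw [← conj_eq_countP]
  omega

end ConjShift

end NPartition

/-- If `c` is a removable corner of `λ` and `a₁ ≠ a₂` are distinct
addable corners such that both transfers `μ₁ = λ(c → a₁)` and `μ₂ = λ(c → a₂)` are
admissible, then `μ₁` and `μ₂` are adjacent in `G_n`; consequently `λ, μ₁, μ₂` span a
triangle in `G_n`. -/
theorem star_triangle {n : ℕ} (f g₁ g₂ : NPartition n) (rc ra₁ ra₂ : ℕ)
    (h₁ : NPartition.IsTransfer f g₁ rc ra₁)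
    (h₂ : NPartition.IsTransfer f g₂ rc ra₂)
    (ha : ra₁ ≠ ra₂) :
    NPartition.Adj g₁ g₂ ∧
      g₁ ≠ g₂ ∧ NPartition.Adj f g₁ ∧ NPartition.Adj f g₂ := by
  have hv : f.parts ra₁ ≠ f.parts ra₂ := f.parts_injOn_isAddableRow.ne h₁.2.1 h₂.2.1 ha
  have hs : NPartition.ConjShift g₁ g₂ (f.parts ra₁) (f.parts ra₂) :=
    h₁.conjShift.symm.trans h₂.conjShift
  exact ⟨Or.inl (hs.exists_isTransfer hv), (hs.ne hv).symm, Or.inl ⟨rc, ra₁, h₁⟩,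
    Or.inl ⟨rc, ra₂, h₂⟩⟩
end

section
/- Let λ be a partition of n, a an addable corner, and c₁, c₂ two distinct removable corners such that both transfers μ₁ = λ(c₁→a) and μ₂ = λ(c₂→a) are admissible. Then μ₁ and μ₂ are adjacent in the partition graph G_n; consequently λ, μ₁, μ₂ span a triangle in G_n. -/
open Finset

/-!
Record a transfer `λ(c → a)` by its multiset of rows: `μ = λ(c → a)` exactly when
`rows μ + {x, y} = rows λ + {x - 1, y + 1}`, where `x`, `y` are the lengths of rows `c`, `a`
(zero rows discarded). For two transfers with the common target `a`, cancellation of multisets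
gives `rows μ₂ + {x₂, x₁ - 1} = rows μ₁ + {x₂ - 1, x₁}`, which is again a transfer, from a row of
length `x₂` to a row of length `x₁ - 1` of `μ₁`; such rows exist because the rows `c₁, c₂, a` of
`λ` are distinct. Distinct removable corners have distinct lengths `x₁ ≠ x₂`, whence `μ₁ ≠ μ₂`.
-/

lemma add_eq_add_of_add_eq_add {M : Type*} [AddCancelCommMonoid M] {a b s x₁ x₂ x₁' x₂' y y' : M}
    (h₁ : a + (x₁ + y) = s + (x₁' + y')) (h₂ : b + (x₂ + y) = s + (x₂' + y')) :
    b + (x₂ + x₁') = a + (x₂' + x₁) := by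
  apply add_right_cancel (b := x₁ + y)
  calc b + (x₂ + x₁') + (x₁ + y) = b + (x₂ + y) + (x₁' + x₁) := by abel
    _ = a + (x₁ + y) + (x₂' + x₁) := by rw [h₁, h₂]; abel
    _ = a + (x₂' + x₁) + (x₁ + y) := by abel

namespace NPartition

variable {n : ℕ}

def posRow (a : ℕ) : Multiset ℕ := ({a} : Multiset ℕ).filter (0 < ·)

lemma posRow_of_pos {a : ℕ} (ha : 0 < a) : posRow a = {a} := by
  simp [posRow, ha]

@[simp] lemma posRow_zero : posRow 0 = 0 := by
  simp [posRow]

lemma filter_pos_singleton (a : ℕ) : ({a} : Multiset ℕ).filter (0 < ·) = posRow a := rfl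

lemma filter_pos_cons (a : ℕ) (s : Multiset ℕ) :
    (a ::ₘ s).filter (0 < ·) = posRow a + s.filter (0 < ·) := by
  rw [← Multiset.singleton_add, Multiset.filter_add]; rfl

lemma filter_pos_pair (a b : ℕ) : ({a, b} : Multiset ℕ).filter (0 < ·) = posRow a + posRow b :=
  filter_pos_cons a {b}

lemma mem_posRow_self {a : ℕ} (ha : 0 < a) : a ∈ posRow a := by
  simp [posRow_of_pos ha]

lemma erase_eq_sub_posRow {s : Multiset ℕ} (h0 : 0 ∉ s) (a : ℕ) : s.erase a = s - posRow a := by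
  rcases Nat.eq_zero_or_pos a with rfl | ha
  · rw [Multiset.erase_of_notMem h0, posRow_zero, tsub_zero]
  · rw [posRow_of_pos ha, Multiset.sub_singleton]

lemma erase_erase_add_posRow {s : Multiset ℕ} (h0 : 0 ∉ s) {a b : ℕ}
    (h : posRow a + posRow b ≤ s) : (s.erase a).erase b + (posRow a + posRow b) = s := by
  have h0' : 0 ∉ s.erase a := fun h' => h0 (Multiset.mem_of_mem_erase h')
  rw [erase_eq_sub_posRow h0', erase_eq_sub_posRow h0, tsub_tsub, tsub_add_cancel_of_le h]

lemma zero_notMem_rows_s7 (p : NPartition n) : 0 ∉ p.rows := by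
  simp [rows]

lemma filter_pos_map_le_rows (p : NPartition n) (I : Finset ℕ) :
    (I.val.map p.parts).filter (0 < ·) ≤ p.rows := by
  rw [Multiset.filter_map, rows, ← Finset.filter_val]
  refine Multiset.map_le_map (Finset.val_le_iff.2 fun i hi => ?_)
  simpa [pos_iff_ne_zero] using (Finset.mem_filter.1 hi).2

lemma posRow_add_posRow_le_rows (p : NPartition n) {i j : ℕ} (hij : i ≠ j) :
    posRow (p.parts i) + posRow (p.parts j) ≤ p.rows := by
  simpa [hij, filter_pos_cons, filter_pos_singleton] using p.filter_pos_map_le_rows {i, j}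

lemma posRow_add_posRow_add_posRow_le_rows (p : NPartition n) {i j k : ℕ} (hij : i ≠ j)
    (hik : i ≠ k) (hjk : j ≠ k) :
    posRow (p.parts i) + posRow (p.parts j) + posRow (p.parts k) ≤ p.rows := by
  simpa [hij, hik, hjk, filter_pos_cons, filter_pos_singleton, add_assoc] using
    p.filter_pos_map_le_rows {i, j, k}

lemma transferRows_add (p : NPartition n) {rc ra : ℕ} (hrc : rc ≠ ra) :
    p.transferRows rc ra + (posRow (p.parts rc) + posRow (p.parts ra))
      = p.rows + (posRow (p.parts rc - 1) + posRow (p.parts ra + 1)) := by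
  rw [transferRows, filter_pos_pair, add_right_comm,
    erase_erase_add_posRow p.zero_notMem_rows_s7 (p.posRow_add_posRow_le_rows hrc)]

lemma IsTransfer.rows_add {f g : NPartition n} {rc ra : ℕ} (h : IsTransfer f g rc ra) :
    g.rows + (posRow (f.parts rc) + posRow (f.parts ra))
      = f.rows + (posRow (f.parts rc - 1) + posRow (f.parts ra + 1)) := by
  obtain ⟨-, -, hne, -, hrows⟩ := h
  rw [hrows]
  exact f.transferRows_add hne

lemma IsRemovableRow.parts_ne {p : NPartition n} {i j : ℕ} (hi : p.IsRemovableRow i)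
    (hj : p.IsRemovableRow j) (hij : i ≠ j) : p.parts i ≠ p.parts j := by
  unfold IsRemovableRow at hi hj
  rcases lt_or_gt_of_ne hij with h | h
  · have := p.antitone (show _ + 1 ≤ _ from h); omega
  · have := p.antitone (show _ + 1 ≤ _ from h); omega

lemma exists_parts_eq_zero (p : NPartition n) : ∃ i, p.parts i = 0 := by
  obtain ⟨i, hi⟩ := Infinite.exists_notMem_finset p.parts.support
  exact ⟨i, Finsupp.notMem_support_iff.1 hi⟩

lemma exists_isRemovableRow_ge (p : NPartition n) {i : ℕ} (hi : 0 < p.parts i) :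
    ∃ r, i ≤ r ∧ p.parts r = p.parts i ∧ p.IsRemovableRow r := by
  classical
  have hex : ∃ k, p.parts (i + k + 1) < p.parts i := by
    obtain ⟨j, hj⟩ := p.exists_parts_eq_zero
    exact ⟨j, (p.antitone (by omega : j ≤ i + j + 1)).trans_lt (hj ▸ hi)⟩
  have hk : p.parts (i + Nat.find hex) = p.parts i := by
    refine le_antisymm (p.antitone (by omega)) ?_
    rcases Nat.eq_zero_or_pos (Nat.find hex) with h | h
    · rw [h, add_zero]
    · have := Nat.find_min hex (show Nat.find hex - 1 < Nat.find hex by omega)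
      rw [show i + (Nat.find hex - 1) + 1 = i + Nat.find hex by omega] at this
      omega
  refine ⟨i + Nat.find hex, by omega, hk, ?_⟩
  rw [IsRemovableRow, hk]
  exact Nat.find_spec hex

lemma exists_isAddableRow_le (p : NPartition n) (i : ℕ) :
    ∃ r, r ≤ i ∧ p.parts r = p.parts i ∧ p.IsAddableRow r := by
  classical
  have hex : ∃ r, p.parts r ≤ p.parts i := ⟨i, le_rfl⟩
  have hle : Nat.find hex ≤ i := Nat.find_min' hex le_rfl
  have hr : p.parts (Nat.find hex) = p.parts i := le_antisymm (Nat.find_spec hex) (p.antitone hle)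
  refine ⟨Nat.find hex, hle, hr, ?_⟩
  rcases Nat.eq_zero_or_pos (Nat.find hex) with h | h
  · exact Or.inl h
  · have := Nat.find_min hex (show Nat.find hex - 1 < Nat.find hex by omega)
    exact Or.inr (by omega)

lemma exists_corners_of_ne (p : NPartition n) {i j : ℕ} (hij : i ≠ j) (hi : 0 < p.parts i) :
    ∃ rc ra, p.IsRemovableRow rc ∧ p.IsAddableRow ra ∧ rc ≠ ra ∧
      p.parts rc = p.parts i ∧ p.parts ra = p.parts j := by
  by_cases hval : p.parts i = p.parts j
  · -- two rows of equal length: remove at the lower one, add at the upper one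
    obtain ⟨lo, hi', hlt, hlo, hhi⟩ :
        ∃ lo hi', lo < hi' ∧ p.parts lo = p.parts i ∧ p.parts hi' = p.parts i := by
      rcases lt_or_gt_of_ne hij with h | h
      · exact ⟨i, j, h, rfl, hval.symm⟩
      · exact ⟨j, i, h, hval.symm, rfl⟩
    obtain ⟨rc, hrc, hrcv, hrem⟩ := p.exists_isRemovableRow_ge (hhi ▸ hi)
    obtain ⟨ra, hra, hrav, hadd⟩ := p.exists_isAddableRow_le lo
    exact ⟨rc, ra, hrem, hadd, by omega, by rw [hrcv, hhi], by rw [hrav, hlo, hval]⟩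
  · obtain ⟨rc, -, hrcv, hrem⟩ := p.exists_isRemovableRow_ge hi
    obtain ⟨ra, -, hrav, hadd⟩ := p.exists_isAddableRow_le j
    exact ⟨rc, ra, hrem, hadd, fun h => hval (by rw [← hrcv, ← hrav, h]), hrcv, hrav⟩

lemma exists_parts_eq_of_posRow_add_le (p : NPartition n) {a b : ℕ} (ha : 0 < a)
    (h : posRow a + posRow b ≤ p.rows) : ∃ i j, i ≠ j ∧ p.parts i = a ∧ p.parts j = b := by
  rw [posRow_of_pos ha] at h
  have ha' : a ∈ p.rows := Multiset.mem_of_le h (by simp)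
  obtain ⟨i, hi, rfl⟩ := Multiset.mem_map.1 ha'
  rcases Nat.eq_zero_or_pos b with rfl | hb
  · obtain ⟨j, hj⟩ := p.exists_parts_eq_zero
    exact ⟨i, j, fun hij => by simp_all, rfl, hj⟩
  · have hb' : b ∈ p.rows.erase (p.parts i) := by
      rw [← Multiset.sub_singleton]
      exact Multiset.mem_of_le (le_tsub_of_add_le_left h) (mem_posRow_self hb)
    rw [rows, ← Multiset.map_erase_of_mem _ _ hi] at hb'
    obtain ⟨j, hj, rfl⟩ := Multiset.mem_map.1 hb'
    exact ⟨i, j, ((p.parts.support.nodup.mem_erase_iff).1 hj).1.symm, rfl, rfl⟩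

lemma exists_isTransfer_of_rows_add {f g : NPartition n} {a b : ℕ} (ha : 0 < a)
    (hab : posRow a + posRow b ≤ f.rows) (hgf : g ≠ f)
    (h : g.rows + (posRow a + posRow b) = f.rows + (posRow (a - 1) + posRow (b + 1))) :
    ∃ rc ra, IsTransfer f g rc ra := by
  obtain ⟨i, j, hij, rfl, rfl⟩ := f.exists_parts_eq_of_posRow_add_le ha hab
  obtain ⟨rc, ra, hrem, hadd, hne, hrc, hra⟩ := f.exists_corners_of_ne hij ha
  refine ⟨rc, ra, hrem, hadd, hne, hgf, ?_⟩
  apply add_right_cancel (b := posRow (f.parts i) + posRow (f.parts j))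
  rw [h, ← hrc, ← hra, f.transferRows_add hne]

lemma posRow_add_posRow_sub_one_ne {a b : ℕ} (ha : 0 < a) (hab : a ≠ b) :
    posRow b + posRow (a - 1) ≠ posRow (b - 1) + posRow a := by
  intro h
  have := congrArg (a ∈ ·) h
  simp only [Multiset.mem_add, mem_posRow_self ha, or_true, eq_iff_iff, iff_true] at this
  simp [posRow] at this
  omega

end NPartition

/-- If `a` is an addable corner of `λ` and `c₁ ≠ c₂` are distinct
removable corners such that both transfers `μ₁ = λ(c₁ → a)` and `μ₂ = λ(c₂ → a)` are
admissible, then `μ₁` and `μ₂` are adjacent in `G_n`; consequently `λ, μ₁, μ₂` span a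
triangle in `G_n`. -/
theorem top_triangle {n : ℕ} (f g₁ g₂ : NPartition n) (rc₁ rc₂ ra : ℕ)
    (h₁ : NPartition.IsTransfer f g₁ rc₁ ra)
    (h₂ : NPartition.IsTransfer f g₂ rc₂ ra)
    (hc : rc₁ ≠ rc₂) :
    NPartition.Adj g₁ g₂ ∧
      g₁ ≠ g₂ ∧ NPartition.Adj f g₁ ∧ NPartition.Adj f g₂ := by
  open NPartition in
  have ⟨hrem₁, _, hne₁, _⟩ := h₁
  have ⟨hrem₂, _, hne₂, _⟩ := h₂
  have hx₁ : 0 < f.parts rc₁ := (Nat.zero_le _).trans_lt hrem₁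
  have hx₂ : 0 < f.parts rc₂ := (Nat.zero_le _).trans_lt hrem₂
  have hx : f.parts rc₁ ≠ f.parts rc₂ := hrem₁.parts_ne hrem₂ hc
  have hs := f.posRow_add_posRow_add_posRow_le_rows hc hne₁ hne₂
  have e₁ := h₁.rows_add
  have e₂ := h₂.rows_add
  have heq : g₂.rows + (posRow (f.parts rc₂) + posRow (f.parts rc₁ - 1))
      = g₁.rows + (posRow (f.parts rc₂ - 1) + posRow (f.parts rc₁)) :=
    add_eq_add_of_add_eq_add e₁ e₂
  have hle : posRow (f.parts rc₂) + posRow (f.parts rc₁ - 1) ≤ g₁.rows := by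
    rw [← add_le_add_iff_right (posRow (f.parts rc₁) + posRow (f.parts ra)), e₁]
    calc _ = posRow (f.parts rc₁) + posRow (f.parts rc₂) + posRow (f.parts ra)
          + posRow (f.parts rc₁ - 1) := by abel
      _ ≤ f.rows + posRow (f.parts rc₁ - 1) := by gcongr
      _ ≤ _ := by rw [← add_assoc]; exact le_self_add
  have hne : g₁ ≠ g₂ := by
    rintro rfl
    exact posRow_add_posRow_sub_one_ne hx₁ hx (add_left_cancel heq)
  refine ⟨Or.inl (exists_isTransfer_of_rows_add hx₂ hle hne.symm ?_), hne,
    Or.inl ⟨rc₁, ra, h₁⟩, Or.inl ⟨rc₂, ra, h₂⟩⟩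
  rwa [Nat.sub_add_cancel hx₁]
end

section
/- Let λ be a partition of n and let μ_i = λ(c_i→a_i), i = 1,…,m, be distinct neighbors of λ such that {λ, μ₁, …, μ_m} is a clique in the partition graph G_n. Then either all removable corners c_i coincide, or all addable corners a_i coincide. -/
open Finset

/-- A partition of `n`: a finitely supported weakly decreasing sequence of
row lengths (rows indexed from `0`) summing to `n`. -/
structure RowPartition (n : ℕ) where
  parts : ℕ →₀ ℕ
  antitone : ∀ ⦃i j : ℕ⦄, i ≤ j → parts j ≤ parts i
  total : parts.sum (fun _ m => m) = n

namespace RowPartition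

variable {n : ℕ}

/-- The multiset of (positive) row lengths of a partition. -/
def rows (f : RowPartition n) : Multiset ℕ := f.parts.support.val.map f.parts

/-- `conj f j` is the number of rows of length at least `j + 1`; i.e. the length of
the `(j+1)`-st column (columns indexed from `0`), the conjugate partition `λ'`. -/
def conj (f : RowPartition n) (j : ℕ) : ℕ :=
  (f.rows.filter (fun m => j + 1 ≤ m)).card

/-- The height `h(λ) = ∑ i · λ_i`, rows indexed from `1`. -/
def height (f : RowPartition n) : ℕ :=
  ∑ i ∈ f.parts.support, (i + 1) * f.parts i

/-- Row `r` (0-indexed) of `f` carries a removable corner: removing its last cell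
again yields a partition. -/
def IsRemovableRow (f : RowPartition n) (r : ℕ) : Prop :=
  f.parts (r + 1) < f.parts r

/-- Row `r` (0-indexed) of `f` carries an addable corner: adding a cell at the end
of this row again yields a partition. -/
def IsAddableRow (f : RowPartition n) (r : ℕ) : Prop :=
  r = 0 ∨ f.parts r < f.parts (r - 1)

/-- The multiset of rows obtained from `f` by removing one cell from the corner in
row `rc` and adding one cell at the corner in row `ra` (zero rows discarded);
reordering is built in since this is a multiset. -/
def transferRows (f : RowPartition n) (rc ra : ℕ) : Multiset ℕ :=
  ((f.rows.erase (f.parts rc)).erase (f.parts ra))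
    + Multiset.filter (fun m => 0 < m) {f.parts rc - 1, f.parts ra + 1}

/-- `IsTransfer f g rc ra` : `g = λ(c → a)` is obtained from `f = λ` by the admissible
transfer of one cell from the removable corner `c` in row `rc` to the addable corner
`a` in row `ra ≠ rc`, followed by reordering, and `g ≠ f`. -/
def IsTransfer (f g : RowPartition n) (rc ra : ℕ) : Prop :=
  f.IsRemovableRow rc ∧ f.IsAddableRow ra ∧ rc ≠ ra ∧ g ≠ f ∧
    g.rows = f.transferRows rc ra

/-- Adjacency in the partition graph `G_n`. -/
def Adj (f g : RowPartition n) : Prop :=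
  (∃ rc ra, IsTransfer f g rc ra) ∨ (∃ rc ra, IsTransfer g f rc ra)

/-- The one-row partition `(n)`. -/
noncomputable def onerow (n : ℕ) : RowPartition n where
  parts := Finsupp.single 0 n
  antitone := by
    intro i j hij
    by_cases hi : i = 0
    · subst hi
      by_cases hj : j = 0 <;> simp [Finsupp.single_apply, eq_comm, hj]
    · have hj : j ≠ 0 := by omega
      simp [Finsupp.single_apply, eq_comm, hi, hj]
  total := Finsupp.sum_single_index rfl

end RowPartition

/-!
Encode a partition by the multiset of column indices of its cells, column `j` occurring `λ'_j`
times; this multiset determines the partition. Moving a cell from a corner in column `c` to a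
corner in column `a` trades one copy of `c` for one copy of `a`. Given transfers `λ → μ_i`
(columns `c_i → a_i`), `λ → μ_j`, and an edge `μ_i → μ_j` (columns `c → a`), the two routes from
`λ` to `μ_j` give `{c_i, a_j, c} = {a_i, c_j, a}`, and as `c_i ≠ a_i` this forces `c_i = c_j`
or `a_i = a_j`. Distinct removable (addable) corners lie in distinct columns, so any two members
of the clique share their removed or their added corner; if some pair differs in the removed
corner, every member shares the added corner with both of them.
-/

theorem forall_eq_or_forall_eq_of_forall_eq_or_eq {ι β γ : Type*} {p : ι → β} {q : ι → γ}
    (h : ∀ i j, p i = p j ∨ q i = q j) : (∀ i j, p i = p j) ∨ (∀ i j, q i = q j) := by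
  by_contra! hcon
  obtain ⟨⟨i₀, j₀, hp⟩, ⟨k₀, l₀, hq⟩⟩ := hcon
  have hq_const : ∀ k, q k = q i₀ := by
    intro k
    by_cases hk : p k = p i₀
    · rw [(h k j₀).resolve_left (hk ▸ hp), (h i₀ j₀).resolve_left hp]
    · exact (h k i₀).resolve_left hk
  exact hq (by rw [hq_const k₀, hq_const l₀])

theorem Multiset.eq_or_eq_of_cons_triangle {α : Type*} [DecidableEq α] {F M₁ M₂ : Multiset α}
    {c₁ a₁ c₂ a₂ c a : α} (h₁ : c₁ ::ₘ M₁ = a₁ ::ₘ F) (h₂ : c₂ ::ₘ M₂ = a₂ ::ₘ F)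
    (h : c ::ₘ M₂ = a ::ₘ M₁) (hne₁ : c₁ ≠ a₁) (hne₂ : c₂ ≠ a₂) : c₁ = c₂ ∨ a₁ = a₂ := by
  have hsum : ({c₁, a₂, c} : Multiset α) = {a₁, c₂, a} := by
    ext x
    have e₁ := congrArg (count x) h₁
    have e₂ := congrArg (count x) h₂
    have e₃ := congrArg (count x) h
    simp only [insert_eq_cons, count_cons, count_singleton] at e₁ e₂ e₃ ⊢
    omega
  by_contra! hne
  -- `c₁` must match `a`, and then `a₂` is left without a partner
  have e₁ := congrArg (count c₁) hsum
  have e₂ := congrArg (count a₂) hsum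
  simp only [insert_eq_cons, count_cons, count_singleton] at e₁ e₂
  split_ifs at e₁ e₂ <;> grind

namespace RowPartition

variable {n : ℕ}

def cellColumns (f : RowPartition n) : Multiset ℕ := f.rows.bind Multiset.range

theorem count_cellColumns (f : RowPartition n) (j : ℕ) : f.cellColumns.count j = f.conj j := by
  rw [cellColumns, conj, ← Multiset.countP_eq_card_filter]
  induction f.rows using Multiset.induction_on with
  | empty => simp
  | cons m s ih =>
    rw [Multiset.cons_bind, Multiset.count_add, ih, Multiset.countP_cons, add_comm]
    simp only [Multiset.count_eq_of_nodup (Multiset.nodup_range m), Multiset.mem_range,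
      Nat.lt_iff_add_one_le]

theorem conj_eq_card (f : RowPartition n) (j : ℕ) :
    f.conj j = #{i ∈ f.parts.support | j < f.parts i} := by
  rw [conj, rows, Multiset.filter_map, Multiset.card_map]
  rfl

theorem lt_parts_iff_lt_conj (f : RowPartition n) (r j : ℕ) : j < f.parts r ↔ r < f.conj j := by
  rw [conj_eq_card]
  constructor
  · intro h
    have hsub : range (r + 1) ⊆ {i ∈ f.parts.support | j < f.parts i} := by
      intro i hi
      have : j < f.parts i := h.trans_le (f.antitone (by simpa [Nat.lt_succ_iff] using hi))
      simp only [mem_filter, Finsupp.mem_support_iff]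
      exact ⟨by omega, this⟩
    simpa using card_le_card hsub
  · intro h
    by_contra! hle
    have hsub : {i ∈ f.parts.support | j < f.parts i} ⊆ range r := by
      intro i hi
      rw [mem_filter] at hi
      by_contra! hri
      have := f.antitone (not_lt.mp (mt mem_range.mpr hri))
      omega
    simpa using (card_le_card hsub).trans_lt' h

theorem ext_parts {f g : RowPartition n} (h : f.parts = g.parts) : f = g := by
  cases f; cases g; cases h; rfl

theorem eq_of_conj_eq {f g : RowPartition n} (h : ∀ j, f.conj j = g.conj j) : f = g :=
  ext_parts <| Finsupp.ext fun r => eq_of_forall_lt_iff fun j => by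
    rw [lt_parts_iff_lt_conj, lt_parts_iff_lt_conj, h]

theorem eq_of_cellColumns_eq {f g : RowPartition n} (h : f.cellColumns = g.cellColumns) : f = g :=
  eq_of_conj_eq fun j => by rw [← count_cellColumns, ← count_cellColumns, h]

theorem mem_rows (f : RowPartition n) {r : ℕ} (hr : 0 < f.parts r) : f.parts r ∈ f.rows :=
  Multiset.mem_map_of_mem _ (by simpa using hr.ne')

theorem pair_le_rows (f : RowPartition n) {r s : ℕ} (hrs : r ≠ s) (hr : 0 < f.parts r)
    (hs : 0 < f.parts s) : f.parts r ::ₘ {f.parts s} ≤ f.rows := by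
  have hsub : ({r, s} : Finset ℕ) ⊆ f.parts.support := by
    simp [insert_subset_iff, hr.ne', hs.ne']
  simpa [rows, hrs] using Multiset.map_le_map (f := f.parts) (val_le_iff.mpr hsub)

theorem erase_erase_add_filter_pos (f : RowPartition n) {r s : ℕ} (hrs : r ≠ s)
    (hr : 0 < f.parts r) :
    (f.rows.erase (f.parts r)).erase (f.parts s) +
      Multiset.filter (0 < ·) {f.parts r, f.parts s} = f.rows := by
  rcases (f.parts s).eq_zero_or_pos with hs | hs
  · have h0 : (0 : ℕ) ∉ f.rows.erase (f.parts r) := fun h0 => by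
      simpa [rows] using Multiset.mem_of_mem_erase h0
    rw [hs, Multiset.erase_of_notMem h0]
    simp only [Multiset.insert_eq_cons, Multiset.filter_cons_of_pos _ hr, lt_irrefl,
      Multiset.filter_singleton, if_false, Multiset.add_cons, Multiset.empty_eq_zero, add_zero,
      Multiset.cons_erase (f.mem_rows hr)]
  · obtain ⟨t, ht⟩ := Multiset.le_iff_exists_add.mp (f.pair_le_rows hrs hr hs)
    rw [ht]
    simp [hr, hs, Multiset.filter_singleton, Multiset.cons_add, add_comm]

theorem bind_range_filter_pos (s : Multiset ℕ) :
    (s.filter (0 < ·)).bind Multiset.range = s.bind Multiset.range := by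
  induction s using Multiset.induction_on with
  | empty => simp
  | cons a s ih =>
    rcases a.eq_zero_or_pos with rfl | ha <;> simp [*]

theorem IsRemovableRow.pos {f : RowPartition n} {r : ℕ} (hr : f.IsRemovableRow r) :
    0 < f.parts r :=
  (Nat.zero_le _).trans_lt hr

theorem IsTransfer.cons_cellColumns {f g : RowPartition n} {rc ra : ℕ}
    (h : IsTransfer f g rc ra) :
    (f.parts rc - 1) ::ₘ g.cellColumns = f.parts ra ::ₘ f.cellColumns := by
  obtain ⟨hrem, -, hne, -, hrows⟩ := h
  have hpos := hrem.pos
  -- with `x, y` the lengths of rows `rc, ra` of `f`: up to zero rows,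
  -- `g.rows + {x, y} = f.rows + {x - 1, y + 1}`; now expand each row into its columns
  have key := congrArg (·.bind Multiset.range) <|
    congrArg (· + Multiset.filter (0 < ·) {f.parts rc, f.parts ra}) hrows
  simp only [transferRows, add_right_comm _ (Multiset.filter _ {f.parts rc - 1, _}),
    f.erase_erase_add_filter_pos hne hpos, Multiset.add_bind, bind_range_filter_pos] at key
  ext j
  have := congrArg (Multiset.count j) key
  obtain ⟨x, hx⟩ := Nat.exists_eq_add_one.mpr hpos
  simp [cellColumns, hx, Multiset.range_succ, Multiset.count_cons] at this ⊢
  omega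

theorem IsTransfer.parts_sub_one_ne {f g : RowPartition n} {rc ra : ℕ}
    (h : IsTransfer f g rc ra) : f.parts rc - 1 ≠ f.parts ra := fun heq =>
  h.2.2.2.1 <| eq_of_cellColumns_eq <| (Multiset.cons_inj_right _).mp (heq ▸ h.cons_cellColumns)

theorem IsRemovableRow.eq_of_parts_eq {f : RowPartition n} {r s : ℕ} (hr : f.IsRemovableRow r)
    (hs : f.IsRemovableRow s) (h : f.parts r = f.parts s) : r = s := by
  rw [IsRemovableRow] at hr hs
  by_contra hne
  rcases Nat.lt_or_gt_of_ne hne with hlt | hlt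
  · have := f.antitone (show r + 1 ≤ s from hlt); omega
  · have := f.antitone (show s + 1 ≤ r from hlt); omega

theorem IsAddableRow.eq_of_parts_eq {f : RowPartition n} {r s : ℕ} (hr : f.IsAddableRow r)
    (hs : f.IsAddableRow s) (h : f.parts r = f.parts s) : r = s := by
  rw [IsAddableRow] at hr hs
  by_contra hne
  rcases Nat.lt_or_gt_of_ne hne with hlt | hlt
  · have := f.antitone (Nat.le_sub_one_of_lt hlt); omega
  · have := f.antitone (Nat.le_sub_one_of_lt hlt); omega

theorem IsTransfer.eq_or_eq_of_isTransfer {f g₁ g₂ : RowPartition n} {rc₁ ra₁ rc₂ ra₂ rc ra : ℕ}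
    (h₁ : IsTransfer f g₁ rc₁ ra₁) (h₂ : IsTransfer f g₂ rc₂ ra₂)
    (h : IsTransfer g₁ g₂ rc ra) : rc₁ = rc₂ ∨ ra₁ = ra₂ := by
  refine (Multiset.eq_or_eq_of_cons_triangle h₁.cons_cellColumns h₂.cons_cellColumns
    h.cons_cellColumns h₁.parts_sub_one_ne h₂.parts_sub_one_ne).imp (fun hc => ?_)
    (h₁.2.1.eq_of_parts_eq h₂.2.1)
  exact h₁.1.eq_of_parts_eq h₂.1 (Nat.sub_one_cancel h₁.1.pos h₂.1.pos hc)

theorem IsTransfer.eq_or_eq_of_adj {f g₁ g₂ : RowPartition n} {rc₁ ra₁ rc₂ ra₂ : ℕ}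
    (h₁ : IsTransfer f g₁ rc₁ ra₁) (h₂ : IsTransfer f g₂ rc₂ ra₂) (h : Adj g₁ g₂) :
    rc₁ = rc₂ ∨ ra₁ = ra₂ := by
  rcases h with ⟨rc, ra, h⟩ | ⟨rc, ra, h⟩
  · exact h₁.eq_or_eq_of_isTransfer h₂ h
  · exact (h₂.eq_or_eq_of_isTransfer h₁ h).imp Eq.symm Eq.symm

end RowPartition

theorem clique_uniform_type_general {n : ℕ} (f : RowPartition n) (m : ℕ)
    (μ : Fin m → RowPartition n) (rc ra : Fin m → ℕ)
    (ht : ∀ i, RowPartition.IsTransfer f (μ i) (rc i) (ra i))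
    (hclique : ∀ i j, i ≠ j → RowPartition.Adj (μ i) (μ j)) :
    (∀ i j, rc i = rc j) ∨ (∀ i j, ra i = ra j) := by
  refine forall_eq_or_forall_eq_of_forall_eq_or_eq fun i j => ?_
  obtain rfl | hij := eq_or_ne i j
  · exact Or.inl rfl
  · exact (ht i).eq_or_eq_of_adj (ht j) (hclique i j hij)

/-- If `μ_i = λ(c_i → a_i)`, `i = 1, …, m`, are distinct neighbors of
`λ` such that `{λ, μ₁, …, μ_m}` is a clique in `G_n`, then either all the removable
corners `c_i` coincide, or all the addable corners `a_i` coincide. -/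
theorem clique_uniform_type {n : ℕ} (f : RowPartition n) (m : ℕ)
    (μ : Fin m → RowPartition n) (rc ra : Fin m → ℕ)
    (ht : ∀ i, RowPartition.IsTransfer f (μ i) (rc i) (ra i))
    (hinj : Function.Injective μ)
    (hclique : ∀ i j, i ≠ j → RowPartition.Adj (μ i) (μ j)) :
    (∀ i j, rc i = rc j) ∨ (∀ i j, ra i = ra j) :=
  clique_uniform_type_general f m μ rc ra ht hclique
end

section
/- Every clique in the partition graph G_n containing a fixed vertex λ is contained in a star-simplex {λ} ∪ {λ(c→a) : a ∈ A} for a single removable corner c, or in a top-simplex {λ} ∪ {λ(c→a) : c ∈ C} for a single addable corner a. -/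
/-!
A partition is the only weakly decreasing sequence with its multiset of rows, so the transfer
`λ(c → a)` changes the row-length sequence of `λ` by exactly `-1` in row `c` and `+1` in row `a`
(when `λ_c = λ_a + 1` it would only swap two rows and give back `λ`). If `μ = λ(c → a)`,
`μ' = λ(c' → a')` and `μ'` is a transfer of `μ`, then `μ' - μ` is supported on two rows, which
forces `c = c'` or `a = a'`. So the transfers from `λ` to the other members of a clique pairwise
share their removable or their addable corner, and a family of pairs that pairwise agree in
some coordinate all agree in one and the same coordinate.
-/

open Finset

/-- A partition of `n`: a finitely supported weakly decreasing sequence of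
row lengths (rows indexed from `0`) summing to `n`. -/
structure IntPartition (n : ℕ) where
  parts : ℕ →₀ ℕ
  antitone : ∀ ⦃i j : ℕ⦄, i ≤ j → parts j ≤ parts i
  total : parts.sum (fun _ m => m) = n

namespace IntPartition

variable {n : ℕ}

/-- The multiset of (positive) row lengths of a partition. -/
def rows (f : IntPartition n) : Multiset ℕ := f.parts.support.val.map f.parts

/-- `conj f j` is the number of rows of length at least `j + 1`; i.e. the length of
the `(j+1)`-st column (columns indexed from `0`), the conjugate partition `λ'`. -/
def conj (f : IntPartition n) (j : ℕ) : ℕ :=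
  (f.rows.filter (fun m => j + 1 ≤ m)).card

/-- The height `h(λ) = ∑ i · λ_i`, rows indexed from `1`. -/
def height (f : IntPartition n) : ℕ :=
  ∑ i ∈ f.parts.support, (i + 1) * f.parts i

/-- Row `r` (0-indexed) of `f` carries a removable corner: removing its last cell
again yields a partition. -/
def IsRemovableRow (f : IntPartition n) (r : ℕ) : Prop :=
  f.parts (r + 1) < f.parts r

/-- Row `r` (0-indexed) of `f` carries an addable corner: adding a cell at the end
of this row again yields a partition. -/
def IsAddableRow (f : IntPartition n) (r : ℕ) : Prop :=
  r = 0 ∨ f.parts r < f.parts (r - 1)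

/-- The multiset of rows obtained from `f` by removing one cell from the corner in
row `rc` and adding one cell at the corner in row `ra` (zero rows discarded);
reordering is built in since this is a multiset. -/
def transferRows (f : IntPartition n) (rc ra : ℕ) : Multiset ℕ :=
  ((f.rows.erase (f.parts rc)).erase (f.parts ra))
    + Multiset.filter (fun m => 0 < m) {f.parts rc - 1, f.parts ra + 1}

/-- `IsTransfer f g rc ra` : `g = λ(c → a)` is obtained from `f = λ` by the admissible
transfer of one cell from the removable corner `c` in row `rc` to the addable corner
`a` in row `ra ≠ rc`, followed by reordering, and `g ≠ f`. -/
def IsTransfer (f g : IntPartition n) (rc ra : ℕ) : Prop :=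
  f.IsRemovableRow rc ∧ f.IsAddableRow ra ∧ rc ≠ ra ∧ g ≠ f ∧
    g.rows = f.transferRows rc ra

/-- Adjacency in the partition graph `G_n`. -/
def Adj (f g : IntPartition n) : Prop :=
  (∃ rc ra, IsTransfer f g rc ra) ∨ (∃ rc ra, IsTransfer g f rc ra)

/-- The one-row partition `(n)`. -/
noncomputable def onerow (n : ℕ) : IntPartition n where
  parts := Finsupp.single 0 n
  antitone := by
    intro i j hij
    by_cases hi : i = 0
    · subst hi
      by_cases hj : j = 0 <;> simp [Finsupp.single_apply, eq_comm, hj]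
    · have hj : j ≠ 0 := by omega
      simp [Finsupp.single_apply, eq_comm, hi, hj]
  total := Finsupp.sum_single_index rfl

end IntPartition

theorem Multiset.eq_of_filter_pos_eq {M M' : Multiset ℕ} (hc : M.card = M'.card)
    (h : M.filter (0 < ·) = M'.filter (0 < ·)) : M = M' := by
  have hzero : ∀ M : Multiset ℕ,
      M.filter (¬ 0 < ·) = Multiset.replicate (M.filter (¬ 0 < ·)).card 0 := fun M =>
    Multiset.eq_replicate_card.mpr fun b hb => by
      have := Multiset.of_mem_filter hb; omega
  have hcard : ∀ M : Multiset ℕ, (M.filter (¬ 0 < ·)).card = M.card - (M.filter (0 < ·)).card :=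
    fun M => by
      have := congrArg Multiset.card (Multiset.filter_add_not (0 < ·) M)
      rw [Multiset.card_add] at this
      omega
  rw [← Multiset.filter_add_not (0 < ·) M, ← Multiset.filter_add_not (0 < ·) M', hzero M,
    hzero M', hcard, hcard, h, hc]

theorem Antitone.eq_of_map_range_eq {α : Type*} [PartialOrder α] {p q : ℕ → α}
    (hp : Antitone p) (hq : Antitone q) {N : ℕ}
    (h : (Multiset.range N).map p = (Multiset.range N).map q) {r : ℕ} (hr : r < N) :
    p r = q r := by
  have hsorted : ∀ {p : ℕ → α}, Antitone p → ((List.range N).map p).SortedGE := fun hp =>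
    List.sortedGE_iff_pairwise.mpr <| List.pairwise_map.mpr <|
      (List.pairwise_lt_range).imp fun hij => hp hij.le
  have := List.Perm.eq_of_sortedGE (hsorted hp) (hsorted hq) (Quotient.exact h)
  simpa [hr] using congrArg (·[r]?) this

theorem exists_forall_eq_or_exists_forall_eq {ι α β : Type*} [Nonempty α] {s : Set ι}
    {c : ι → α} {a : ι → β} (h : ∀ i ∈ s, ∀ j ∈ s, c i = c j ∨ a i = a j) :
    (∃ x, ∀ i ∈ s, c i = x) ∨ ∃ y, ∀ i ∈ s, a i = y := by
  by_cases hc : ∀ i ∈ s, ∀ j ∈ s, c i = c j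
  · left
    rcases s.eq_empty_or_nonempty with rfl | ⟨i₀, hi₀⟩
    · exact ⟨Classical.arbitrary α, by simp⟩
    · exact ⟨c i₀, fun i hi => hc i hi i₀ hi₀⟩
  · push Not at hc
    obtain ⟨i, hi, j, hj, hij⟩ := hc
    refine Or.inr ⟨a i, fun k hk => ?_⟩
    rcases h k hk i hi with hki | hki
    · exact ((h k hk j hj).resolve_left (hki ▸ hij)).trans ((h i hi j hj).resolve_left hij).symm
    · exact hki

namespace IntPartition

variable {n : ℕ}

theorem parts_eq_zero_of_le (f : IntPartition n) {r : ℕ} (hr : n ≤ r) : f.parts r = 0 := by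
  by_contra h
  have hsub : Finset.range (r + 1) ⊆ f.parts.support := fun i hi =>
    Finsupp.mem_support_iff.mpr fun h0 =>
      h (Nat.eq_zero_of_le_zero (h0 ▸ f.antitone (Nat.lt_succ_iff.mp (Finset.mem_range.mp hi))))
  have := calc r + 1 = ∑ _i ∈ Finset.range (r + 1), 1 := by simp
    _ ≤ ∑ i ∈ Finset.range (r + 1), f.parts i :=
        Finset.sum_le_sum fun i hi =>
          Nat.one_le_iff_ne_zero.mpr (Finsupp.mem_support_iff.mp (hsub hi))
    _ ≤ ∑ i ∈ f.parts.support, f.parts i := Finset.sum_le_sum_of_subset hsub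
    _ = n := f.total
  omega

theorem filter_pos_map_range (f : IntPartition n) {N : ℕ} (hN : n ≤ N) :
    ((Multiset.range N).map f.parts).filter (0 < ·) = f.rows := by
  have : (Finset.range N).filter (fun r => 0 < f.parts r) = f.parts.support := by
    ext r
    simp only [Finset.mem_filter, Finset.mem_range, Finsupp.mem_support_iff, Nat.pos_iff_ne_zero]
    exact ⟨And.right, fun h => ⟨not_le.mp fun hr => h (f.parts_eq_zero_of_le (hN.trans hr)), h⟩⟩
  rw [Multiset.filter_map, rows, ← this, Finset.filter_val]
  rfl

theorem coe_parts_eq_of_rows_eq (f : IntPartition n) {q : ℕ → ℕ} (hq : Antitone q) {N₀ : ℕ}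
    (h : ∀ N, N₀ ≤ N → f.rows = ((Multiset.range N).map q).filter (0 < ·)) : ⇑f.parts = q := by
  funext r
  have hN : n ≤ N₀ + n + r + 1 := by omega
  refine Antitone.eq_of_map_range_eq (fun _ _ hij => f.antitone hij) hq
    (Multiset.eq_of_filter_pos_eq (by simp) ?_) (by omega : r < N₀ + n + r + 1)
  rw [filter_pos_map_range f hN, h (N₀ + n + r + 1) (by omega)]

theorem ext_of_rows_eq {f g : IntPartition n} (h : f.rows = g.rows) : f = g := by
  have : f.parts = g.parts := DFunLike.coe_injective <|
    f.coe_parts_eq_of_rows_eq (fun _ _ hij => g.antitone hij) fun N hN =>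
      h.trans (g.filter_pos_map_range hN).symm
  cases f; cases g; congr

def moveCell (p : ℕ → ℕ) (rc ra : ℕ) : ℕ → ℕ :=
  Function.update (Function.update p rc (p rc - 1)) ra (p ra + 1)

theorem moveCell_moveCell {p : ℕ → ℕ} {rc ra : ℕ} (hne : rc ≠ ra) (hrc : 0 < p rc) :
    moveCell (moveCell p rc ra) ra rc = p := by
  funext r
  simp only [moveCell, Function.update_apply]
  split_ifs <;> subst_vars <;> omega

theorem map_range_eq_cons_cons (q : ℕ → ℕ) {N rc ra : ℕ} (hne : rc ≠ ra) (hrc : rc < N)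
    (hra : ra < N) :
    (Multiset.range N).map q =
      q rc ::ₘ q ra ::ₘ (((Multiset.range N).erase rc).erase ra).map q := by
  rw [← Multiset.map_cons q, ← Multiset.map_cons q, Multiset.cons_erase
    ((Multiset.mem_erase_of_ne hne.symm).mpr (Multiset.mem_range.mpr hra)),
    Multiset.cons_erase (Multiset.mem_range.mpr hrc)]

theorem map_erase_erase_moveCell (p : ℕ → ℕ) (N : ℕ) {rc ra : ℕ} :
    (((Multiset.range N).erase rc).erase ra).map (moveCell p rc ra)
      = (((Multiset.range N).erase rc).erase ra).map p := by
  refine Multiset.map_congr rfl fun r hr => ?_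
  have hnd := (Multiset.nodup_range N).erase rc
  rw [hnd.mem_erase_iff, (Multiset.nodup_range N).mem_erase_iff] at hr
  simp [moveCell, hr.1, hr.2.1]

@[simp] theorem moveCell_apply_left (p : ℕ → ℕ) {rc ra : ℕ} (hne : rc ≠ ra) :
    moveCell p rc ra rc = p rc - 1 := by
  simp [moveCell, hne]

@[simp] theorem moveCell_apply_right (p : ℕ → ℕ) (rc ra : ℕ) :
    moveCell p rc ra ra = p ra + 1 := by
  simp [moveCell]

theorem transferRows_eq_filter_map_moveCell (f : IntPartition n) {rc ra N : ℕ}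
    (hrc : 0 < f.parts rc) (hne : rc ≠ ra) (hN : n ≤ N) (hrcN : rc < N) (hraN : ra < N) :
    f.transferRows rc ra = ((Multiset.range N).map (moveCell f.parts rc ra)).filter (0 < ·) := by
  have hrows := f.filter_pos_map_range hN
  rw [map_range_eq_cons_cons _ hne hrcN hraN, Multiset.filter_cons_of_pos _ hrc] at hrows
  set M := (((Multiset.range N).erase rc).erase ra).map f.parts
  have herase : ((f.parts ra ::ₘ M).filter (0 < ·)).erase (f.parts ra) = M.filter (0 < ·) := by
    rcases Nat.eq_zero_or_pos (f.parts ra) with h0 | hpos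
    · rw [Multiset.filter_cons_of_neg _ (by omega), h0]
      exact Multiset.erase_of_notMem fun h => (Multiset.of_mem_filter h).false
    · rw [Multiset.filter_cons_of_pos (p := (0 < ·)) _ hpos, Multiset.erase_cons_head]
  rw [map_range_eq_cons_cons _ hne hrcN hraN, map_erase_erase_moveCell, transferRows, ← hrows,
    Multiset.erase_cons_head, herase, moveCell_apply_left _ hne, moveCell_apply_right,
    ← Multiset.filter_add, Multiset.insert_eq_cons, Multiset.add_cons, add_comm,
    Multiset.singleton_add]

theorem map_range_moveCell_of_eq (p : ℕ → ℕ) {N rc ra : ℕ} (hne : rc ≠ ra) (hrc : rc < N)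
    (hra : ra < N) (h : p rc = p ra + 1) :
    (Multiset.range N).map (moveCell p rc ra) = (Multiset.range N).map p := by
  rw [map_range_eq_cons_cons _ hne hrc hra, map_range_eq_cons_cons p hne hrc hra,
    map_erase_erase_moveCell, moveCell_apply_left _ hne, moveCell_apply_right, h,
    Nat.add_sub_cancel, Multiset.cons_swap]

theorem IsRemovableRow.pos {f : IntPartition n} {r : ℕ} (h : f.IsRemovableRow r) :
    0 < f.parts r :=
  Nat.zero_lt_of_lt h

theorem antitone_moveCell {f : IntPartition n} {rc ra : ℕ} (hrc : f.IsRemovableRow rc)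
    (hra : f.IsAddableRow ra) (hne : rc ≠ ra) (hsucc : f.parts rc ≠ f.parts ra + 1) :
    Antitone (moveCell f.parts rc ra) := by
  refine antitone_nat_of_succ_le fun r => ?_
  have hr := f.antitone (Nat.le_add_right r 1)
  have hra : ra = r + 1 → f.parts (r + 1) < f.parts r := by
    rintro rfl
    simpa [IsAddableRow] using hra
  unfold IsRemovableRow at hrc
  simp only [moveCell, Function.update_apply]
  split_ifs <;> subst_vars <;> omega

theorem moveCell_triangle {p : ℕ → ℕ} {rc ra rc' ra' s t : ℕ} (hne : rc ≠ ra)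
    (hne' : rc' ≠ ra') (hst : s ≠ t) (hrc : 0 < p rc) (hrc' : 0 < p rc')
    (h : moveCell (moveCell p rc ra) s t = moveCell p rc' ra') : rc = rc' ∨ ra = ra' := by
  -- If `rc ≠ rc'` and `ra ≠ ra'`, then `moveCell p rc' ra' - moveCell p rc ra` has zero, three
  -- or four nonzero entries, while `moveCell q s t - q` has one or two.
  by_contra! hc
  have e := fun r => congrFun h r
  simp only [moveCell, Function.update_apply] at e
  have := e rc; have := e ra; have := e rc'; have := e ra'; have := e s; have := e t
  grind

namespace IsTransfer

variable {f g g' : IntPartition n} {rc ra rc' ra' : ℕ}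

theorem parts_ne_succ (h : IsTransfer f g rc ra) : f.parts rc ≠ f.parts ra + 1 := by
  intro heq
  obtain ⟨hrc, -, hne, hgf, hrows⟩ := h
  refine hgf (ext_of_rows_eq ?_)
  have hN : n ≤ n + rc + ra + 1 := by omega
  rw [hrows, transferRows_eq_filter_map_moveCell f hrc.pos hne hN (by omega) (by omega),
    map_range_moveCell_of_eq _ hne (by omega) (by omega) heq, filter_pos_map_range f hN]

theorem coe_parts (h : IsTransfer f g rc ra) : ⇑g.parts = moveCell f.parts rc ra :=
  g.coe_parts_eq_of_rows_eq (antitone_moveCell h.1 h.2.1 h.2.2.1 h.parts_ne_succ)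
    (N₀ := n + rc + ra + 1) fun _ hN =>
      h.2.2.2.2.trans (transferRows_eq_filter_map_moveCell f h.1.pos h.2.2.1 (by omega)
        (by omega) (by omega))

theorem symm (h : IsTransfer f g rc ra) : IsTransfer g f ra rc := by
  have hg := h.coe_parts
  obtain ⟨hrc, -, hne, hgf, -⟩ := h
  have hrc' : g.IsRemovableRow ra := by
    have := f.antitone (Nat.le_add_right ra 1)
    rw [IsRemovableRow, hg]
    simp only [moveCell, Function.update_apply]
    split_ifs <;> subst_vars <;> omega
  have hra' : g.IsAddableRow rc := by
    cases rc with
    | zero => exact Or.inl rfl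
    | succ r =>
      have := f.antitone (Nat.le_add_right r 1)
      have := hrc.pos
      rw [IsAddableRow, hg]
      simp only [moveCell, Function.update_apply, Nat.add_sub_cancel]
      right
      split_ifs <;> subst_vars <;> omega
  refine ⟨hrc', hra', hne.symm, hgf.symm, ?_⟩
  have hN : n ≤ n + rc + ra + 1 := by omega
  rw [transferRows_eq_filter_map_moveCell g hrc'.pos hne.symm hN (by omega) (by omega), hg,
    moveCell_moveCell hne hrc.pos, filter_pos_map_range f hN]

theorem eq_or_eq_of_isTransfer {s t : ℕ} (hg : IsTransfer f g rc ra)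
    (hg' : IsTransfer f g' rc' ra') (hgg' : IsTransfer g g' s t) : rc = rc' ∨ ra = ra' :=
  moveCell_triangle hg.2.2.1 hg'.2.2.1 hgg'.2.2.1 hg.1.pos hg'.1.pos <| by
    rw [← hg.coe_parts, ← hgg'.coe_parts, hg'.coe_parts]

theorem eq_or_eq_of_adj (hg : IsTransfer f g rc ra) (hg' : IsTransfer f g' rc' ra')
    (hadj : Adj g g') : rc = rc' ∨ ra = ra' := by
  rcases hadj with ⟨s, t, h⟩ | ⟨s, t, h⟩
  · exact hg.eq_or_eq_of_isTransfer hg' h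
  · exact (hg'.eq_or_eq_of_isTransfer hg h).imp Eq.symm Eq.symm

end IsTransfer

end IntPartition

/-- Every clique in `G_n` containing a fixed vertex `λ` is contained
in a star-simplex `{λ} ∪ {λ(c → a) : a ∈ A}` for a single removable corner `c`, or in a
top-simplex `{λ} ∪ {λ(c → a) : c ∈ C}` for a single addable corner `a`. -/
theorem clique_in_star_or_top {n : ℕ} (f : IntPartition n) (Q : Finset (IntPartition n))
    (hf : f ∈ Q)
    (hclique : ∀ g ∈ Q, ∀ g' ∈ Q, g ≠ g' → IntPartition.Adj g g') :
    (∃ rc, ∀ g ∈ Q, g = f ∨ ∃ ra, IntPartition.IsTransfer f g rc ra) ∨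
    (∃ ra, ∀ g ∈ Q, g = f ∨ ∃ rc, IntPartition.IsTransfer f g rc ra) := by
  have hT : ∀ g ∈ Q, g ≠ f → ∃ rc ra, IntPartition.IsTransfer f g rc ra := fun g hg hgf =>
    (hclique f hf g hg hgf.symm).elim id fun ⟨rc, ra, h⟩ => ⟨ra, rc, h.symm⟩
  choose! c a hca using hT
  have hpair : ∀ g ∈ {g | g ∈ Q ∧ g ≠ f}, ∀ g' ∈ {g | g ∈ Q ∧ g ≠ f},
      c g = c g' ∨ a g = a g' := by
    rintro g ⟨hg, hgf⟩ g' ⟨hg', hg'f⟩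
    obtain rfl | hne := eq_or_ne g g'
    · exact Or.inl rfl
    · exact (hca g hg hgf).eq_or_eq_of_adj (hca g' hg' hg'f) (hclique g hg g' hg' hne)
  refine (exists_forall_eq_or_exists_forall_eq hpair).imp
    (fun ⟨x, hx⟩ => ⟨x, fun g hg => or_iff_not_imp_left.mpr fun hgf => ?_⟩)
    (fun ⟨y, hy⟩ => ⟨y, fun g hg => or_iff_not_imp_left.mpr fun hgf => ?_⟩)
  · exact ⟨a g, hx g ⟨hg, hgf⟩ ▸ hca g hg hgf⟩
  · exact ⟨c g, hy g ⟨hg, hgf⟩ ▸ hca g hg hgf⟩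
end

section
/- Let λ be a partition of n and let μ₁ = λ(c₁→a₁) and μ₂ = λ(c₂→a₂) be neighbors of λ with h(μ₁) < h(λ) and h(μ₂) < h(λ), c₁ ≠ c₂, a₁ ≠ a₂, and r(c₁) ≤ r(c₂). Then the transfer ν := λ(c₂→a₁) is admissible, ν is adjacent to both μ₁ and μ₂ in G_n, and h(ν) < h(λ). -/
open Finset

/-- A partition of `n`: a finitely supported weakly decreasing sequence of
row lengths (rows indexed from `0`) summing to `n`. -/
structure PartitionN (n : ℕ) where
  parts : ℕ →₀ ℕ
  antitone : ∀ ⦃i j : ℕ⦄, i ≤ j → parts j ≤ parts i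
  total : parts.sum (fun _ m => m) = n

namespace PartitionN

variable {n : ℕ}

/-- The multiset of (positive) row lengths of a partition. -/
def rows (f : PartitionN n) : Multiset ℕ := f.parts.support.val.map f.parts

/-- `conj f j` is the number of rows of length at least `j + 1`; i.e. the length of
the `(j+1)`-st column (columns indexed from `0`), the conjugate partition `λ'`. -/
def conj (f : PartitionN n) (j : ℕ) : ℕ :=
  (f.rows.filter (fun m => j + 1 ≤ m)).card

/-- The height `h(λ) = ∑ i · λ_i`, rows indexed from `1`. -/
def height (f : PartitionN n) : ℕ :=
  ∑ i ∈ f.parts.support, (i + 1) * f.parts i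

/-- Row `r` (0-indexed) of `f` carries a removable corner: removing its last cell
again yields a partition. -/
def IsRemovableRow (f : PartitionN n) (r : ℕ) : Prop :=
  f.parts (r + 1) < f.parts r

/-- Row `r` (0-indexed) of `f` carries an addable corner: adding a cell at the end
of this row again yields a partition. -/
def IsAddableRow (f : PartitionN n) (r : ℕ) : Prop :=
  r = 0 ∨ f.parts r < f.parts (r - 1)

/-- The multiset of rows obtained from `f` by removing one cell from the corner in
row `rc` and adding one cell at the corner in row `ra` (zero rows discarded);
reordering is built in since this is a multiset. -/
def transferRows (f : PartitionN n) (rc ra : ℕ) : Multiset ℕ :=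
  ((f.rows.erase (f.parts rc)).erase (f.parts ra))
    + Multiset.filter (fun m => 0 < m) {f.parts rc - 1, f.parts ra + 1}

/-- `IsTransfer f g rc ra` : `g = λ(c → a)` is obtained from `f = λ` by the admissible
transfer of one cell from the removable corner `c` in row `rc` to the addable corner
`a` in row `ra ≠ rc`, followed by reordering, and `g ≠ f`. -/
def IsTransfer (f g : PartitionN n) (rc ra : ℕ) : Prop :=
  f.IsRemovableRow rc ∧ f.IsAddableRow ra ∧ rc ≠ ra ∧ g ≠ f ∧
    g.rows = f.transferRows rc ra

/-- Adjacency in the partition graph `G_n`. -/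
def Adj (f g : PartitionN n) : Prop :=
  (∃ rc ra, IsTransfer f g rc ra) ∨ (∃ rc ra, IsTransfer g f rc ra)

/-- The one-row partition `(n)`. -/
noncomputable def onerow (n : ℕ) : PartitionN n where
  parts := Finsupp.single 0 n
  antitone := by
    intro i j hij
    by_cases hi : i = 0
    · subst hi
      by_cases hj : j = 0 <;> simp [Finsupp.single_apply, eq_comm, hj]
    · have hj : j ≠ 0 := by omega
      simp [Finsupp.single_apply, eq_comm, hi, hj]
  total := Finsupp.sum_single_index rfl

end PartitionN

/-! A height-decreasing transfer `λ(c → a)` never needs reordering: if it did, it would only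
swap two row lengths and return `λ`.  So `μ = λ(c → a)` is the pointwise move of one cell from
row `c` up to row `a < c` (an antitone sequence is determined by its multiset of values), and
`h(μ) = h(λ) - (c - a)`.  With `a₁ < c₁ ≤ c₂`, the pointwise move `ν` of a cell from row `c₂` to
row `a₁` is again a partition; `μ₁ → ν` refills the corner `c₁` vacated by `μ₁` from row `c₂`, and
`ν → μ₂` moves the cell just placed at `a₁` on to `a₂`: both are composites of pointwise moves. -/

namespace PartitionN

variable {n : ℕ}

section

variable {α : Type*}

/-- The contribution `{x}` of a row of length `x` to `rows`; rows of length `0` are discarded. -/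
def posSingleton (x : ℕ) : Multiset ℕ := if 0 < x then {x} else 0

lemma zero_notMem_posSingleton (x : ℕ) : 0 ∉ posSingleton x := by
  unfold posSingleton
  split_ifs with hx
  · simpa using hx.ne
  · simp

lemma zero_notMem_map_support (p : α →₀ ℕ) : 0 ∉ p.support.val.map p := by
  simp

lemma filter_pos_pair (x y : ℕ) :
    Multiset.filter (0 < ·) {x, y} = posSingleton x + posSingleton y := by
  rw [Multiset.insert_eq_cons, Multiset.filter_cons, Multiset.filter_singleton]
  rfl

lemma erase_add_posSingleton {s : Multiset ℕ} (hs : 0 ∉ s) (x : ℕ) :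
    (s + posSingleton x).erase x = s := by
  unfold posSingleton
  split_ifs with hx
  · rw [Multiset.erase_add_right_pos _ (Multiset.mem_singleton_self x), Multiset.erase_singleton,
      add_zero]
  · rw [Nat.eq_zero_of_not_pos hx, add_zero, Multiset.erase_of_notMem hs]

lemma map_support_eq_filter_map (p : α →₀ ℕ) {s : Finset α} (hs : p.support ⊆ s) :
    p.support.val.map p = (s.val.map p).filter (0 < ·) := by
  classical
  rw [Multiset.filter_map, ← Finset.filter_val]
  congr 2
  ext j
  simp only [Finset.mem_filter, Function.comp_apply, Nat.pos_iff_ne_zero]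
  exact ⟨fun hj => ⟨hs hj, Finsupp.mem_support_iff.1 hj⟩,
    fun hj => Finsupp.mem_support_iff.2 hj.2⟩

lemma map_support_update_add [DecidableEq α] (p : α →₀ ℕ) (a : α) (b : ℕ) :
    (p.update a b).support.val.map (p.update a b) + posSingleton (p a)
      = p.support.val.map p + posSingleton b := by
  have split : ∀ q : α →₀ ℕ, q.support ⊆ insert a p.support →
      q.support.val.map q
        = posSingleton (q a) + ((p.support.erase a).val.map q).filter (0 < ·) := by
    intro q hq
    have hs : insert a p.support = insert a (p.support.erase a) := by
      rw [← Finset.erase_insert_eq_erase, Finset.insert_erase (Finset.mem_insert_self _ _)]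
    rw [map_support_eq_filter_map q hq, hs, Finset.insert_val_of_notMem (Finset.notMem_erase _ _),
      Multiset.map_cons, Multiset.filter_cons]
    rfl
  have hagree : (p.support.erase a).val.map (p.update a b) = (p.support.erase a).val.map p :=
    Multiset.map_congr rfl fun j hj => by
      rw [Finsupp.update_apply, if_neg (Finset.ne_of_mem_erase hj)]
  rw [split _ (Finsupp.support_update_subset p a), split p (Finset.subset_insert _ _), hagree,
    Finsupp.update_apply, if_pos rfl]
  abel

noncomputable def moveCell (p : α →₀ ℕ) (c a : α) : α →₀ ℕ :=
  (p.update c (p c - 1)).update a (p a + 1)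

variable [DecidableEq α]

lemma moveCell_apply (p : α →₀ ℕ) (c a j : α) :
    moveCell p c a j = if j = a then p a + 1 else if j = c then p c - 1 else p j := by
  simp only [moveCell, Finsupp.update_apply]

lemma map_support_moveCell_add (p : α →₀ ℕ) {c a : α} (hca : c ≠ a) :
    (moveCell p c a).support.val.map (moveCell p c a) + posSingleton (p c) + posSingleton (p a)
      = p.support.val.map p + posSingleton (p c - 1) + posSingleton (p a + 1) := by
  have h₁ := map_support_update_add (p.update c (p c - 1)) a (p a + 1)
  have h₂ := map_support_update_add p c (p c - 1)
  rw [Finsupp.update_apply, if_neg hca.symm] at h₁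
  rw [moveCell, add_right_comm, h₁, add_right_comm, h₂]

lemma sum_moveCell (p : α →₀ ℕ) {c a : α} (hca : c ≠ a) (hc : 0 < p c) (w : α → ℕ) :
    (moveCell p c a).sum (fun i m => w i * m) + w c = p.sum (fun i m => w i * m) + w a := by
  have h₁ := Finsupp.sum_update_add (p.update c (p c - 1)) a (p a + 1) (fun i m => w i * m)
    (fun _ => mul_zero _) (fun _ _ _ => mul_add _ _ _)
  have h₂ := Finsupp.sum_update_add p c (p c - 1) (fun i m => w i * m)
    (fun _ => mul_zero _) (fun _ _ _ => mul_add _ _ _)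
  rw [Finsupp.update_apply, if_neg hca.symm] at h₁
  obtain ⟨k, hk⟩ : ∃ k, p c = k + 1 := ⟨p c - 1, by omega⟩
  rw [moveCell]
  simp only [hk, Nat.add_sub_cancel, mul_add, mul_one] at h₁ h₂ ⊢
  omega

lemma moveCell_moveCell (p : α →₀ ℕ) {a b c : α} (hab : a ≠ b) (hac : a ≠ c) (hbc : b ≠ c) :
    moveCell (moveCell p a b) b c = moveCell p a c := by
  ext j
  simp only [moveCell_apply]
  split_ifs <;> subst_vars <;> first | omega | simp_all

lemma moveCell_moveCell_of_pos (p : α →₀ ℕ) {a b c : α} (hab : a ≠ b) (hac : a ≠ c) (hbc : b ≠ c)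
    (hb : 0 < p b) : moveCell (moveCell p b c) a b = moveCell p a c := by
  ext j
  simp only [moveCell_apply]
  split_ifs <;> subst_vars <;> first | omega | simp_all

lemma erase_erase_add_posSingleton (p : α →₀ ℕ) {c a : α} (hca : c ≠ a) :
    ((p.support.val.map p).erase (p c)).erase (p a) + posSingleton (p c) + posSingleton (p a)
      = p.support.val.map p := by
  set q := (p.update c 0).update a 0
  have h₁ := map_support_update_add p c 0
  have h₂ := map_support_update_add (p.update c 0) a 0
  rw [Finsupp.update_apply, if_neg hca.symm] at h₂
  have h₀ : posSingleton 0 = 0 := rfl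
  rw [h₀, add_zero] at h₁ h₂
  have hq : p.support.val.map p
      = q.support.val.map q + posSingleton (p a) + posSingleton (p c) := by
    rw [← h₁, ← h₂]
  have hpos : 0 ∉ q.support.val.map q + posSingleton (p a) := by
    simpa only [Multiset.mem_add, not_or] using
      ⟨zero_notMem_map_support q, zero_notMem_posSingleton _⟩
  rw [hq, erase_add_posSingleton hpos, erase_add_posSingleton (zero_notMem_map_support q)]
  abel

end

lemma antitone_moveCell {p : ℕ →₀ ℕ} (hp : Antitone p) {c a : ℕ} (hc : p (c + 1) < p c)
    (ha : a = 0 ∨ p a < p (a - 1)) (hsorted : a < c ∨ p a + 2 ≤ p c) :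
    Antitone (moveCell p c a) := by
  have ha' : ∀ i, i + 1 = a → p a < p i := by
    rintro i rfl
    simpa using ha
  refine antitone_nat_of_succ_le fun i => ?_
  have := hp (Nat.le_add_right i 1)
  have := ha' i
  simp only [moveCell_apply]
  split_ifs <;> subst_vars <;> omega

lemma le_apply_iff_lt_card {p : ℕ →₀ ℕ} (hp : Antitone p) {k : ℕ} (hk : 0 < k) (i : ℕ) :
    k ≤ p i ↔ i < ((p.support.val.map p).filter (k ≤ ·)).card := by
  classical
  set S := p.support.filter (fun j => k ≤ p j)
  have hS : ((p.support.val.map p).filter (k ≤ ·)).card = S.card := by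
    rw [Multiset.filter_map, Multiset.card_map, ← Finset.filter_val]
    rfl
  have hmem : ∀ j, j ∈ S ↔ k ≤ p j := fun j => by
    simp only [S, Finset.mem_filter, Finsupp.mem_support_iff]
    omega
  rw [hS]
  constructor
  · intro hki
    have : Finset.range (i + 1) ⊆ S := fun j hj =>
      (hmem j).2 (hki.trans (hp (Nat.lt_succ_iff.1 (Finset.mem_range.1 hj))))
    simpa using Finset.card_le_card this
  · intro hi
    by_contra hki
    have : S ⊆ Finset.range i := fun j hj => Finset.mem_range.2 <| by
      by_contra hij
      exact hki (((hmem j).1 hj).trans (hp (not_lt.1 hij)))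
    have := Finset.card_le_card this
    rw [Finset.card_range] at this
    omega

lemma eq_of_antitone_of_map_support_eq {p q : ℕ →₀ ℕ} (hp : Antitone p) (hq : Antitone q)
    (h : p.support.val.map p = q.support.val.map q) : p = q := by
  ext i
  refine eq_of_forall_le_iff fun k => ?_
  rcases Nat.eq_zero_or_pos k with rfl | hk
  · simp
  · rw [le_apply_iff_lt_card hp hk, le_apply_iff_lt_card hq hk, h]

lemma ext {f g : PartitionN n} (h : f.parts = g.parts) : f = g := by
  cases f
  cases g
  cases h
  rfl

lemma rows_injective : Function.Injective (rows (n := n)) := fun f g h =>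
  ext (eq_of_antitone_of_map_support_eq f.antitone g.antitone h)

lemma transferRows_add_posSingleton (f : PartitionN n) {c a : ℕ} (hca : c ≠ a) :
    f.transferRows c a + posSingleton (f.parts c) + posSingleton (f.parts a)
      = f.rows + posSingleton (f.parts c - 1) + posSingleton (f.parts a + 1) := by
  rw [rows, ← erase_erase_add_posSingleton f.parts hca, transferRows, filter_pos_pair, rows]
  abel

lemma rows_eq_transferRows {f g : PartitionN n} {c a : ℕ} (hca : c ≠ a)
    (hg : g.parts = moveCell f.parts c a) : g.rows = f.transferRows c a := by
  have := map_support_moveCell_add f.parts hca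
  rw [← hg] at this
  change g.rows + _ + _ = f.rows + _ + _ at this
  rw [← transferRows_add_posSingleton f hca] at this
  exact add_right_cancel (add_right_cancel this)

lemma height_add_of_parts_eq_moveCell {f g : PartitionN n} {c a : ℕ} (hca : c ≠ a)
    (hc : 0 < f.parts c) (hg : g.parts = moveCell f.parts c a) :
    g.height + c = f.height + a := by
  have := sum_moveCell f.parts hca hc (· + 1)
  rw [← hg] at this
  change g.height + (c + 1) = f.height + (a + 1) at this
  omega

noncomputable def transfer (f : PartitionN n) (c a : ℕ) (hc : f.IsRemovableRow c)
    (ha : f.IsAddableRow a) (hsorted : a < c ∨ f.parts a + 2 ≤ f.parts c) : PartitionN n where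
  parts := moveCell f.parts c a
  antitone := antitone_moveCell f.antitone hc ha hsorted
  total := by
    have hc' : f.parts (c + 1) < f.parts c := hc
    have hca : c ≠ a := by rintro rfl; omega
    have := sum_moveCell f.parts hca (by omega) 1
    simp only [Pi.one_apply, one_mul] at this
    have := f.total
    omega

lemma IsRemovableRow.pos {f : PartitionN n} {r : ℕ} (h : f.IsRemovableRow r) : 0 < f.parts r :=
  Nat.zero_lt_of_lt h

lemma IsTransfer.lt_or_add_two_le {f g : PartitionN n} {c a : ℕ} (h : IsTransfer f g c a) :
    a < c ∨ f.parts a + 2 ≤ f.parts c := by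
  -- Otherwise `c < a` and `f a = f c - 1`: the transfer merely swaps two row lengths, and
  -- reordering gives back `f`, contradicting `g ≠ f`.
  obtain ⟨hc, -, hca, hgf, hrows⟩ := h
  by_contra! hbad
  have hc' : f.parts (c + 1) < f.parts c := hc
  have hfa : f.parts a + 1 = f.parts c := by
    have := f.antitone (show c + 1 ≤ a by omega)
    omega
  have := transferRows_add_posSingleton f hca
  rw [show f.parts c - 1 = f.parts a by omega, hfa, add_right_comm f.rows] at this
  exact hgf (rows_injective (hrows.trans (add_right_cancel (add_right_cancel this))))

lemma IsTransfer.parts_eq {f g : PartitionN n} {c a : ℕ} (h : IsTransfer f g c a) :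
    g.parts = moveCell f.parts c a := by
  have : g = f.transfer c a h.1 h.2.1 h.lt_or_add_two_le :=
    rows_injective (h.2.2.2.2.trans (rows_eq_transferRows h.2.2.1 rfl).symm)
  rw [this]
  rfl

lemma IsTransfer.height_add {f g : PartitionN n} {c a : ℕ} (h : IsTransfer f g c a) :
    g.height + c = f.height + a :=
  height_add_of_parts_eq_moveCell h.2.2.1 h.1.pos h.parts_eq

lemma IsTransfer.lt_of_height_lt {f g : PartitionN n} {c a : ℕ} (h : IsTransfer f g c a)
    (hh : g.height < f.height) : a < c := by
  have := h.height_add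
  omega

lemma isTransfer_of_parts_eq_moveCell {f g : PartitionN n} {c a : ℕ} (hc : f.IsRemovableRow c)
    (ha : f.IsAddableRow a) (hca : c ≠ a) (hg : g.parts = moveCell f.parts c a) :
    IsTransfer f g c a := by
  refine ⟨hc, ha, hca, fun hgf => ?_, rows_eq_transferRows hca hg⟩
  have := congrArg (· a) hg
  simp [hgf, moveCell_apply] at this

lemma isRemovableRow_of_parts_eq_moveCell {f g : PartitionN n} {c a : ℕ} (hca : c ≠ a)
    (hg : g.parts = moveCell f.parts c a) : g.IsRemovableRow a := by
  have := f.antitone (Nat.le_add_right a 1)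
  change g.parts (a + 1) < g.parts a
  simp only [hg, moveCell_apply]
  split_ifs <;> subst_vars <;> omega

lemma isAddableRow_of_parts_eq_moveCell {f g : PartitionN n} {c a : ℕ} (hca : c ≠ a)
    (hc : 0 < f.parts c) (hg : g.parts = moveCell f.parts c a) : g.IsAddableRow c := by
  rcases Nat.eq_zero_or_pos c with rfl | hc₀
  · exact Or.inl rfl
  have := f.antitone (Nat.sub_le c 1)
  refine Or.inr ?_
  simp only [hg, moveCell_apply]
  split_ifs <;> subst_vars <;> omega

lemma IsRemovableRow.of_parts_eq_moveCell {f g : PartitionN n} {r c a : ℕ}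
    (h : f.IsRemovableRow r) (hg : g.parts = moveCell f.parts c a) (hrc : r ≠ c)
    (hra : r + 1 ≠ a) : g.IsRemovableRow r := by
  have h' : f.parts (r + 1) < f.parts r := h
  change g.parts (r + 1) < g.parts r
  simp only [hg, moveCell_apply]
  split_ifs <;> subst_vars <;> omega

lemma IsAddableRow.of_parts_eq_moveCell {f g : PartitionN n} {r c a : ℕ}
    (h : f.IsAddableRow r) (hg : g.parts = moveCell f.parts c a) (hra : r ≠ a)
    (hrc : r - 1 ≠ c) : g.IsAddableRow r := by
  refine h.imp id fun h' => ?_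
  simp only [hg, moveCell_apply]
  split_ifs <;> subst_vars <;> omega

end PartitionN

/-- Let `μ₁ = λ(c₁ → a₁)` and `μ₂ = λ(c₂ → a₂)` be neighbors of `λ`
with `h(μ₁) < h(λ)`, `h(μ₂) < h(λ)`, `c₁ ≠ c₂`, `a₁ ≠ a₂` and `r(c₁) ≤ r(c₂)`.  Then
the transfer `ν := λ(c₂ → a₁)` is admissible, `ν` is adjacent to both `μ₁` and `μ₂`
in `G_n`, and `h(ν) < h(λ)`. -/
theorem local_peak_reduction {n : ℕ} (f g₁ g₂ : PartitionN n) (rc₁ ra₁ rc₂ ra₂ : ℕ)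
    (h₁ : PartitionN.IsTransfer f g₁ rc₁ ra₁)
    (h₂ : PartitionN.IsTransfer f g₂ rc₂ ra₂)
    (hh₁ : g₁.height < f.height) (hh₂ : g₂.height < f.height)
    (hc : rc₁ ≠ rc₂) (ha : ra₁ ≠ ra₂) (hle : rc₁ ≤ rc₂) :
    ∃ ν : PartitionN n, PartitionN.IsTransfer f ν rc₂ ra₁ ∧
      PartitionN.Adj ν g₁ ∧ PartitionN.Adj ν g₂ ∧ ν.height < f.height := by
  have hp₁ := h₁.parts_eq
  have hp₂ := h₂.parts_eq
  have hlt₁ := h₁.lt_of_height_lt hh₁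
  have hlt₂ := h₂.lt_of_height_lt hh₂
  have hrc : rc₁ < rc₂ := lt_of_le_of_ne hle hc
  set ν := f.transfer rc₂ ra₁ h₂.1 h₁.2.1 (Or.inl (by omega))
  have hν : ν.parts = PartitionN.moveCell f.parts rc₂ ra₁ := rfl
  have hνf : f.IsTransfer ν rc₂ ra₁ :=
    PartitionN.isTransfer_of_parts_eq_moveCell h₂.1 h₁.2.1 (by omega) hν
  refine ⟨ν, hνf, Or.inr ⟨rc₂, rc₁, ?_⟩, Or.inl ⟨ra₁, ra₂, ?_⟩, by have := hνf.height_add; omega⟩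
  · refine PartitionN.isTransfer_of_parts_eq_moveCell
      (h₂.1.of_parts_eq_moveCell hp₁ hc.symm (by omega))
      (PartitionN.isAddableRow_of_parts_eq_moveCell (by omega) h₁.1.pos hp₁) hc.symm ?_
    rw [hν, hp₁, PartitionN.moveCell_moveCell_of_pos _ hc.symm (by omega) (by omega) h₁.1.pos]
  · refine PartitionN.isTransfer_of_parts_eq_moveCell
      (PartitionN.isRemovableRow_of_parts_eq_moveCell (by omega) hν)
      (h₂.2.1.of_parts_eq_moveCell hν (Ne.symm ha) (by omega)) ha ?_
    rw [hp₂, hν, PartitionN.moveCell_moveCell _ (by omega) (by omega) ha]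
end
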